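/- Monotonicity of quenched correlations in the bond set: if B' ⊆ B are two bond sets on the same finite site set V, x > 0, and b ∈ B', then the quenched correlation computed with bond set B' is at most that computed with bond set B: [⟨S_b⟩]_{B'} ≤ [⟨S_b⟩]_B (all parameters equal to x). Consequently, since [⟨S_b⟩]_B ≤ 1 for every B, along any increasing sequence of bond sets the quenched correlations [⟨S_b⟩] converge. -/

import Mathlib

open MeasureTheory ProbabilityTheory Filter

noncomputable section

/-- The real value ±1 of a Boolean spin. -/
def spin (s : Bool) : ℝ := if s then 1 else -1

/-- The bond spin `S_b = S_n S_{n'}` for a bond `b` with endpoints `ep b = (n, n')`. -/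
def bondSpin {V ι : Type*} (ep : ι → V × V) (S : V → Bool) (b : ι) : ℝ :=
  spin (S (ep b).1) * spin (S (ep b).2)

/-- The potential `U(j, S) = Σ_b x_b j_b S_b`. -/
def potential {V ι : Type*} [Fintype ι] (ep : ι → V × V) (x j : ι → ℝ)
    (S : V → Bool) : ℝ :=
  ∑ b, x b * j b * bondSpin ep S b

/-- The partition function `Z(j) = Σ_S exp U(j,S)`. -/
def partitionFn {V ι : Type*} [Fintype V] [DecidableEq V] [Fintype ι]
    (ep : ι → V × V) (x j : ι → ℝ) : ℝ :=
  ∑ S : V → Bool, Real.exp (potential ep x j S)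

/-- The Boltzmann–Gibbs expectation `⟨f⟩` at fixed disorder `j`. -/
def gibbs {V ι : Type*} [Fintype V] [DecidableEq V] [Fintype ι]
    (ep : ι → V × V) (x j : ι → ℝ) (f : (V → Bool) → ℝ) : ℝ :=
  (∑ S : V → Bool, f S * Real.exp (potential ep x j S)) / partitionFn ep x j

/-- The law of the couplings: independent Gaussians, `j_b` of mean `x_b` and variance 1. -/
def couplings {ι : Type*} [Fintype ι] (x : ι → ℝ) : Measure (ι → ℝ) :=
  Measure.pi fun b => gaussianReal (x b) 1

/-- The quenched average `[F]`. -/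
def quenched {ι : Type*} [Fintype ι] (x : ι → ℝ) (F : (ι → ℝ) → ℝ) : ℝ :=
  ∫ j, F j ∂(couplings x)

/-- The quenched pressure `P({x}) = [ln Z]`. -/
def pressure {V ι : Type*} [Fintype V] [DecidableEq V] [Fintype ι]
    (ep : ι → V × V) (x : ι → ℝ) : ℝ :=
  quenched x fun j => Real.log (partitionFn ep x j)

/-!
Gauge symmetry: for a configuration `σ`, flipping `S ↦ σ S` and `j_c ↦ σ_c j_c` (`σ_c` the bond
spin of `σ`) leaves the Gibbs weights invariant and maps the coupling law of means `y` to that of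
means `σ_c y_c`. On the Nishimori line the density of the latter with respect to the centred law
is `exp U(j, σ)` up to a constant, so summing over `σ` makes the Gibbs measure the conditional law
of `σ` given `j`. This yields the Nishimori identity `[⟨S_b⟩ ψ] = [ψ]` for every bounded `ψ`
that changes sign like `S_b` under the gauge.

For `B' ⊆ B` let `φ, φ'` be the correlations `⟨S_b⟩` for the bond sets `B, B'`. Since `φ'` only
depends on the couplings in `B'`, where both laws agree, the Nishimori identity gives
`0 ≤ [(φ - φ')²]_B = [φ]_B - 2 [φ']_{B'} + [φ']_{B'} = [φ]_B - [φ']_{B'}`.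
-/

open scoped ENNReal NNReal

lemma Set.indicator_univ_pi_prod {ι : Type*} [Fintype ι] {α : ι → Type*} {M : Type*}
    [CommMonoidWithZero M] (s : (i : ι) → Set (α i)) (f : (i : ι) → α i → M) (x : (i : ι) → α i) :
    (Set.univ.pi s).indicator (fun x => ∏ i, f i (x i)) x = ∏ i, (s i).indicator (f i) (x i) := by
  classical
  simp only [Set.indicator_apply, Set.mem_univ_pi, Finset.prod_ite_zero, Finset.mem_univ,
    forall_const]

theorem MeasureTheory.Measure.pi_withDensity {ι : Type*} [Fintype ι] {α : ι → Type*}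
    [∀ i, MeasurableSpace (α i)] (μ : (i : ι) → Measure (α i)) [∀ i, IsProbabilityMeasure (μ i)]
    {f : (i : ι) → α i → ℝ≥0∞} (hf : ∀ i, Measurable (f i))
    [∀ i, SigmaFinite ((μ i).withDensity (f i))] :
    Measure.pi (fun i => (μ i).withDensity (f i)) =
      (Measure.pi μ).withDensity (fun x => ∏ i, f i (x i)) := by
  refine Measure.pi_eq fun s hs => ?_
  rw [withDensity_apply _ (MeasurableSet.univ_pi hs), ← lintegral_indicator (.univ_pi hs)]
  simp_rw [Set.indicator_univ_pi_prod]
  rw [lintegral_prod_eq_prod_lintegral_of_indepFun Finset.univ _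
    (iIndepFun_pi fun i => ((hf i).indicator (hs i)).aemeasurable)
    fun i => ((hf i).indicator (hs i)).comp (measurable_pi_apply i)]
  refine Finset.prod_congr rfl fun i _ => ?_
  rw [withDensity_apply _ (hs i), ← lintegral_indicator (hs i),
    ← (measurePreserving_eval μ i).lintegral_comp ((hf i).indicator (hs i))]

lemma gaussianReal_eq_withDensity (m : ℝ) :
    gaussianReal m 1 =
      (gaussianReal 0 1).withDensity fun t => ENNReal.ofReal (Real.exp (m * t - m ^ 2 / 2)) := by
  rw [gaussianReal_of_var_ne_zero _ one_ne_zero, gaussianReal_of_var_ne_zero _ one_ne_zero,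
    ← withDensity_mul _ (measurable_gaussianPDF 0 1) (by fun_prop)]
  congr 1
  funext t
  rw [Pi.mul_apply, gaussianPDF, gaussianPDF, ← ENNReal.ofReal_mul (gaussianPDFReal_nonneg _ _ _),
    gaussianPDFReal, gaussianPDFReal, mul_assoc _ (Real.exp _), ← Real.exp_add]
  congr 3
  push_cast
  ring

section

variable {V ι : Type*}

lemma spin_mul_self (s : Bool) : spin s * spin s = 1 := by cases s <;> simp [spin]

lemma spin_beq (s t : Bool) : spin (s == t) = spin s * spin t := by
  cases s <;> cases t <;> simp [spin]

lemma bondSpin_mul_self (ep : ι → V × V) (S : V → Bool) (c : ι) :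
    bondSpin ep S c * bondSpin ep S c = 1 := by
  simp only [bondSpin]
  linear_combination (spin (S (ep c).2) * spin (S (ep c).2)) * spin_mul_self (S (ep c).1) +
    spin_mul_self (S (ep c).2)

lemma abs_bondSpin (ep : ι → V × V) (S : V → Bool) (c : ι) : |bondSpin ep S c| = 1 := by
  simp only [bondSpin, abs_mul]
  cases S (ep c).1 <;> cases S (ep c).2 <;> simp [spin]

-- `σ n == S n` encodes the product of the ±1 spins `σ_n S_n`.
def gaugeSpins (σ S : V → Bool) : V → Bool := fun n => σ n == S n

def gaugeCouplings (ep : ι → V × V) (σ : V → Bool) (j : ι → ℝ) : ι → ℝ :=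
  fun c => bondSpin ep σ c * j c

lemma gaugeSpins_involutive (σ : V → Bool) : Function.Involutive (gaugeSpins σ) := by
  intro S; funext n; simp only [gaugeSpins]; cases σ n <;> cases S n <;> rfl

lemma bondSpin_gaugeSpins (ep : ι → V × V) (σ S : V → Bool) (c : ι) :
    bondSpin ep (gaugeSpins σ S) c = bondSpin ep σ c * bondSpin ep S c := by
  simp only [bondSpin, gaugeSpins, spin_beq]; ring

variable [Fintype ι]

lemma potential_gaugeCouplings (ep : ι → V × V) (y j : ι → ℝ) (σ S : V → Bool) :
    potential ep y (gaugeCouplings ep σ j) S = potential ep y j (gaugeSpins σ S) := by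
  simp only [potential, gaugeCouplings, bondSpin_gaugeSpins]
  exact Finset.sum_congr rfl fun c _ => by ring

instance (x : ι → ℝ) : IsProbabilityMeasure (couplings x) := by
  unfold couplings; infer_instance

lemma couplings_map_mul (y ε : ι → ℝ) (hε : ∀ c, ε c * ε c = 1) :
    (couplings y).map (fun j c => ε c * j c) = couplings (fun c => ε c * y c) := by
  unfold couplings
  rw [Measure.pi_map_pi fun c => (measurable_const_mul (ε c)).aemeasurable]
  congr 1
  funext c
  rw [gaussianReal_map_const_mul]
  congr
  ext
  simp [← sq, ← hε c]

lemma integral_couplings_gaugeCouplings (ep : ι → V × V) (y : ι → ℝ) (σ : V → Bool)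
    {G : (ι → ℝ) → ℝ} (hG : Measurable G) :
    ∫ j, G j ∂couplings (gaugeCouplings ep σ y) = ∫ j, G (gaugeCouplings ep σ j) ∂couplings y := by
  unfold gaugeCouplings
  rw [← couplings_map_mul y _ (bondSpin_mul_self ep σ),
    integral_map (measurable_pi_lambda _ fun c => (measurable_pi_apply c).const_mul _).aemeasurable
      hG.aestronglyMeasurable]

def couplingsDensity (m j : ι → ℝ) : ℝ := Real.exp (∑ c, (m c * j c - m c ^ 2 / 2))

lemma measurable_couplingsDensity (m : ι → ℝ) : Measurable (couplingsDensity m) := by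
  unfold couplingsDensity; fun_prop

lemma couplings_eq_withDensity (m : ι → ℝ) :
    couplings m = (couplings 0).withDensity fun j => ENNReal.ofReal (couplingsDensity m j) := by
  have hγ : (fun c => gaussianReal (m c) 1) = fun c =>
      (gaussianReal 0 1).withDensity fun t => ENNReal.ofReal (Real.exp (m c * t - m c ^ 2 / 2)) :=
    funext fun c => gaussianReal_eq_withDensity (m c)
  have : ∀ c, SigmaFinite ((gaussianReal 0 1).withDensity
      fun t => ENNReal.ofReal (Real.exp (m c * t - m c ^ 2 / 2))) := fun c =>
    gaussianReal_eq_withDensity (m c) ▸ inferInstance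
  unfold couplings
  rw [hγ, Measure.pi_withDensity _ fun c => by fun_prop]
  simp only [Pi.zero_apply, couplingsDensity, Real.exp_sum,
    ENNReal.ofReal_prod_of_nonneg fun c _ => (Real.exp_pos _).le]

lemma integral_couplings (m : ι → ℝ) (G : (ι → ℝ) → ℝ) :
    ∫ j, G j ∂couplings m = ∫ j, couplingsDensity m j * G j ∂couplings 0 := by
  rw [couplings_eq_withDensity, integral_withDensity_eq_integral_toReal_smul
    (measurable_couplingsDensity m).ennreal_ofReal (ae_of_all _ fun _ => ENNReal.ofReal_lt_top)]
  simp only [ENNReal.toReal_ofReal (Real.exp_pos _).le, couplingsDensity, smul_eq_mul]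

lemma integrable_couplings_iff (m : ι → ℝ) {G : (ι → ℝ) → ℝ} :
    Integrable G (couplings m) ↔ Integrable (fun j => couplingsDensity m j * G j) (couplings 0) := by
  rw [couplings_eq_withDensity, integrable_withDensity_iff_integrable_smul'
    (measurable_couplingsDensity m).ennreal_ofReal (ae_of_all _ fun _ => ENNReal.ofReal_lt_top)]
  simp only [ENNReal.toReal_ofReal (Real.exp_pos _).le, couplingsDensity, smul_eq_mul]

lemma integral_couplings_congr_of_dependsOn {s : Finset ι} {m₁ m₂ : ι → ℝ}
    (hm : ∀ c ∈ s, m₁ c = m₂ c) {h : (ι → ℝ) → ℝ} (hh : Measurable h) (hdep : DependsOn h s) :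
    ∫ j, h j ∂couplings m₁ = ∫ j, h j ∂couplings m₂ := by
  classical
  have hmarg : ∀ m : ι → ℝ, ∫ j, h j ∂couplings m =
      ∫ w, h (Function.updateFinset 0 s w) ∂Measure.pi fun c : s => gaussianReal (m c) 1 := by
    intro m
    rw [couplings, ← Measure.infinitePi_eq_pi, ← integral_restrict_infinitePi (X := fun _ => ℝ)
      (fun c => gaussianReal (m c) 1) (f := fun w => h (Function.updateFinset 0 s w))
      (hh.comp measurable_updateFinset).aestronglyMeasurable]
    exact integral_congr_ae (ae_of_all _ fun j => hdep fun c hc => by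
      simp [Function.updateFinset, Finset.mem_coe.mp hc])
  rw [hmarg, hmarg]
  congr 3 with c
  rw [hm c c.2]

lemma couplingsDensity_gaugeCouplings (ep : ι → V × V) (y j : ι → ℝ) (σ : V → Bool) :
    couplingsDensity (gaugeCouplings ep σ y) j =
      Real.exp (potential ep y j σ) * Real.exp (-∑ c, y c ^ 2 / 2) := by
  rw [couplingsDensity, ← Real.exp_add, potential, ← Finset.sum_neg_distrib,
    ← Finset.sum_add_distrib]
  congr 1
  refine Finset.sum_congr rfl fun c _ => ?_
  simp only [gaugeCouplings]
  linear_combination (-y c ^ 2 / 2) * bondSpin_mul_self ep σ c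

variable [Fintype V] [DecidableEq V]

lemma partitionFn_pos (ep : ι → V × V) (y j : ι → ℝ) : 0 < partitionFn ep y j :=
  Finset.sum_pos (fun _ _ => Real.exp_pos _) Finset.univ_nonempty

lemma gibbs_gaugeCouplings (ep : ι → V × V) (y j : ι → ℝ) (σ : V → Bool) (f : (V → Bool) → ℝ) :
    gibbs ep y (gaugeCouplings ep σ j) f = gibbs ep y j (fun S => f (gaugeSpins σ S)) := by
  let e := (gaugeSpins_involutive σ).toPerm
  simp only [gibbs, partitionFn, potential_gaugeCouplings]
  congr 1
  · exact Fintype.sum_equiv e _ _ fun S => by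
      simp [e, gaugeSpins_involutive σ S]
  · exact Fintype.sum_equiv e _ _ fun _ => rfl

lemma gibbs_const_mul (ep : ι → V × V) (y j : ι → ℝ) (a : ℝ) (f : (V → Bool) → ℝ) :
    gibbs ep y j (fun S => a * f S) = a * gibbs ep y j f := by
  simp only [gibbs, mul_assoc, ← Finset.mul_sum, mul_div_assoc]

lemma gibbs_bondSpin_gaugeCouplings (ep : ι → V × V) (y : ι → ℝ) (b : ι) (σ : V → Bool) (j : ι → ℝ) :
    gibbs ep y (gaugeCouplings ep σ j) (fun S => bondSpin ep S b) =
      bondSpin ep σ b * gibbs ep y j (fun S => bondSpin ep S b) := by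
  simp only [gibbs_gaugeCouplings, bondSpin_gaugeSpins, gibbs_const_mul]

lemma abs_gibbs_le (ep : ι → V × V) (y j : ι → ℝ) {f : (V → Bool) → ℝ} {C : ℝ}
    (hf : ∀ S, |f S| ≤ C) : |gibbs ep y j f| ≤ C := by
  have hZ := partitionFn_pos ep y j
  rw [gibbs, abs_div, abs_of_pos hZ, div_le_iff₀ hZ, partitionFn, Finset.mul_sum]
  refine (Finset.abs_sum_le_sum_abs _ _).trans (Finset.sum_le_sum fun S _ => ?_)
  rw [abs_mul, Real.abs_exp]
  exact mul_le_mul_of_nonneg_right (hf S) (Real.exp_pos _).le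

lemma continuous_gibbs (ep : ι → V × V) (y : ι → ℝ) (f : (V → Bool) → ℝ) :
    Continuous fun j => gibbs ep y j f := by
  simp only [gibbs, partitionFn, potential]
  exact Continuous.div (by fun_prop) (by fun_prop) fun j => (partitionFn_pos ep y j).ne'

lemma gibbs_dependsOn (ep : ι → V × V) {y : ι → ℝ} {s : Set ι} (hy : ∀ c ∉ s, y c = 0)
    (f : (V → Bool) → ℝ) : DependsOn (fun j => gibbs ep y j f) s := by
  intro j j' hjj'
  have hU : ∀ S, potential ep y j S = potential ep y j' S := fun S =>
    Finset.sum_congr rfl fun c _ => by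
      by_cases hc : c ∈ s
      · rw [hjj' c hc]
      · simp [hy c hc]
  simp only [gibbs, partitionFn, hU]

lemma sum_couplingsDensity_gaugeCouplings_mul (ep : ι → V × V) (y j : ι → ℝ)
    (f : (V → Bool) → ℝ) :
    ∑ σ, couplingsDensity (gaugeCouplings ep σ y) j * f σ =
      ∑ σ, couplingsDensity (gaugeCouplings ep σ y) j * gibbs ep y j f := by
  simp only [couplingsDensity_gaugeCouplings, ← Finset.sum_mul, mul_right_comm _ _ (f _),
    mul_right_comm _ _ (gibbs _ _ _ _)]
  rw [← partitionFn, gibbs, mul_div_cancel₀ _ (partitionFn_pos ep y j).ne']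
  simp only [mul_comm (f _)]

theorem sum_integral_mul_eq_sum_integral_gibbs_mul (ep : ι → V × V) (y : ι → ℝ)
    (f : (V → Bool) → ℝ) {h : (ι → ℝ) → ℝ}
    (hh : ∀ σ, Integrable h (couplings (gaugeCouplings ep σ y))) :
    ∑ σ, ∫ j, f σ * h j ∂couplings (gaugeCouplings ep σ y) =
      ∑ σ, ∫ j, gibbs ep y j f * h j ∂couplings (gaugeCouplings ep σ y) := by
  have hgibbs : ∀ j, ‖gibbs ep y j f‖ ≤ ∑ S, |f S| := fun j =>
    abs_gibbs_le ep y j fun S => Finset.single_le_sum (fun S _ => abs_nonneg (f S))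
      (Finset.mem_univ S)
  have hint : ∀ (F : (V → Bool) → (ι → ℝ) → ℝ),
      (∀ σ, Integrable (F σ) (couplings (gaugeCouplings ep σ y))) →
      ∫ j, ∑ σ, couplingsDensity (gaugeCouplings ep σ y) j * F σ j ∂couplings 0 =
        ∑ σ, ∫ j, F σ j ∂couplings (gaugeCouplings ep σ y) := fun F hF => by
    rw [integral_finsetSum _ fun σ _ => (integrable_couplings_iff _).1 (hF σ)]
    exact Finset.sum_congr rfl fun σ _ => (integral_couplings _ _).symm
  rw [← hint _ fun σ => (hh σ).const_mul (f σ),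
    ← hint _ fun σ => (hh σ).bdd_mul (continuous_gibbs ep y f).aestronglyMeasurable
      (ae_of_all _ hgibbs)]
  simp only [← mul_assoc, ← Finset.sum_mul, sum_couplingsDensity_gaugeCouplings_mul]

/-- **Nishimori identity.** -/
theorem integral_gibbs_bondSpin_mul (ep : ι → V × V) (y : ι → ℝ) (b : ι) {ψ : (ι → ℝ) → ℝ}
    (hψ : Measurable ψ) {C : ℝ} (hψC : ∀ j, |ψ j| ≤ C)
    (hgauge : ∀ σ j, ψ (gaugeCouplings ep σ j) = bondSpin ep σ b * ψ j) :
    ∫ j, gibbs ep y j (fun S => bondSpin ep S b) * ψ j ∂couplings y = ∫ j, ψ j ∂couplings y := by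
  have hφ := continuous_gibbs ep y (fun S => bondSpin ep S b)
  have hbayes := sum_integral_mul_eq_sum_integral_gibbs_mul ep y (fun S => bondSpin ep S b)
    (h := ψ) fun σ => .of_bound hψ.aestronglyMeasurable C (ae_of_all _ hψC)
  have hleft : ∀ σ, ∫ j, bondSpin ep σ b * ψ j ∂couplings (gaugeCouplings ep σ y) =
      ∫ j, ψ j ∂couplings y := fun σ => by
    rw [integral_couplings_gaugeCouplings ep y σ (G := fun j => bondSpin ep σ b * ψ j)
      (measurable_const.mul hψ)]
    simp only [hgauge, ← mul_assoc, bondSpin_mul_self, one_mul]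
  have hright : ∀ σ, ∫ j, gibbs ep y j (fun S => bondSpin ep S b) * ψ j
      ∂couplings (gaugeCouplings ep σ y) =
      ∫ j, gibbs ep y j (fun S => bondSpin ep S b) * ψ j ∂couplings y := fun σ => by
    rw [integral_couplings_gaugeCouplings ep y σ
      (G := fun j => gibbs ep y j (fun S => bondSpin ep S b) * ψ j) (hφ.measurable.mul hψ)]
    refine integral_congr_ae (ae_of_all _ fun j => ?_)
    simp only [gibbs_bondSpin_gaugeCouplings, hgauge]
    linear_combination (gibbs ep y j (fun S => bondSpin ep S b) * ψ j) *
      bondSpin_mul_self ep σ b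
  simp only [hleft, hright, Finset.sum_const, nsmul_eq_mul] at hbayes
  exact (mul_left_cancel₀ (by positivity) hbayes).symm

lemma abs_gibbs_bondSpin_le_one (ep : ι → V × V) (y j : ι → ℝ) (b : ι) :
    |gibbs ep y j (fun S => bondSpin ep S b)| ≤ 1 :=
  abs_gibbs_le ep y j fun S => (abs_bondSpin ep S b).le

lemma quenched_gibbs_bondSpin_le_one (ep : ι → V × V) (m y : ι → ℝ) (b : ι) :
    quenched m (fun j => gibbs ep y j (fun S => bondSpin ep S b)) ≤ 1 := by
  have h := norm_integral_le_of_norm_le_const (μ := couplings m) (ae_of_all _ fun j =>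
    (Real.norm_eq_abs _).trans_le (abs_gibbs_bondSpin_le_one ep y j b))
  rw [Real.norm_eq_abs, probReal_univ, mul_one] at h
  exact (le_abs_self _).trans h

theorem quenched_gibbs_bondSpin_le_of_restrict (ep : ι → V × V) (b : ι) {s : Finset ι}
    {y y' : ι → ℝ} (hagree : ∀ c ∈ s, y' c = y c) (hzero : ∀ c ∉ s, y' c = 0) :
    quenched y' (fun j => gibbs ep y' j (fun S => bondSpin ep S b)) ≤
      quenched y (fun j => gibbs ep y j (fun S => bondSpin ep S b)) := by
  set φ := fun j => gibbs ep y j (fun S => bondSpin ep S b)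
  set φ' := fun j => gibbs ep y' j (fun S => bondSpin ep S b)
  have hφm : Measurable φ := (continuous_gibbs ep y _).measurable
  have hφ'm : Measurable φ' := (continuous_gibbs ep y' _).measurable
  have hφ'dep : DependsOn φ' s := gibbs_dependsOn ep (fun c hc => hzero c hc) _
  have hint : ∀ u v : (ι → ℝ) → ℝ, Measurable u → Measurable v → (∀ j, |u j| ≤ 1) →
      (∀ j, |v j| ≤ 1) → Integrable (fun j => u j * v j) (couplings y) := fun u v hu hv hu1 hv1 =>
    .of_bound (hu.mul hv).aestronglyMeasurable 1 (ae_of_all _ fun j => by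
      rw [Real.norm_eq_abs, abs_mul]; exact mul_le_one₀ (hu1 j) (abs_nonneg _) (hv1 j))
  have hφ1 : ∀ j, |φ j| ≤ 1 := fun j => abs_gibbs_bondSpin_le_one ep y j b
  have hφ'1 : ∀ j, |φ' j| ≤ 1 := fun j => abs_gibbs_bondSpin_le_one ep y' j b
  have hnish : ∫ j, φ j * φ j ∂couplings y = ∫ j, φ j ∂couplings y :=
    integral_gibbs_bondSpin_mul ep y b hφm hφ1 (gibbs_bondSpin_gaugeCouplings ep y b)
  have hnish' : ∫ j, φ j * φ' j ∂couplings y = ∫ j, φ' j ∂couplings y :=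
    integral_gibbs_bondSpin_mul ep y b hφ'm hφ'1 (gibbs_bondSpin_gaugeCouplings ep y' b)
  have hnish'' : ∫ j, φ' j * φ' j ∂couplings y' = ∫ j, φ' j ∂couplings y' :=
    integral_gibbs_bondSpin_mul ep y' b hφ'm hφ'1 (gibbs_bondSpin_gaugeCouplings ep y' b)
  have hmarg : ∫ j, φ' j ∂couplings y = ∫ j, φ' j ∂couplings y' :=
    integral_couplings_congr_of_dependsOn (fun c hc => (hagree c hc).symm) hφ'm hφ'dep
  have hmarg' : ∫ j, φ' j * φ' j ∂couplings y = ∫ j, φ' j * φ' j ∂couplings y' :=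
    integral_couplings_congr_of_dependsOn (fun c hc => (hagree c hc).symm) (hφ'm.mul hφ'm)
      fun j j' hjj' => by simp only [hφ'dep hjj']
  have hsq : 0 ≤ ∫ j, (φ j - φ' j) ^ 2 ∂couplings y := integral_nonneg fun j => sq_nonneg _
  have hexpand : ∫ j, (φ j - φ' j) ^ 2 ∂couplings y = ∫ j, φ j * φ j ∂couplings y -
      2 * ∫ j, φ j * φ' j ∂couplings y + ∫ j, φ' j * φ' j ∂couplings y := by
    rw [← integral_const_mul, ← integral_sub, ← integral_add]
    · exact integral_congr_ae (ae_of_all _ fun j => by ring)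
    · exact (hint _ _ hφm hφm hφ1 hφ1).sub ((hint _ _ hφm hφ'm hφ1 hφ'1).const_mul 2)
    · exact hint _ _ hφ'm hφ'm hφ'1 hφ'1
    · exact hint _ _ hφm hφm hφ1 hφ1
    · exact (hint _ _ hφm hφ'm hφ1 hφ'1).const_mul 2
  simp only [quenched]
  linarith

end

theorem correlation_monotone_in_bonds_general
    {V ι : Type*} [Fintype V] [DecidableEq V] [Fintype ι] [DecidableEq ι]
    (ep : ι → V × V) (B' B : Finset ι) (hBB : B' ⊆ B) (x : ℝ) (b : ι) :
    quenched (fun c => if c ∈ B' then x else 0)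
        (fun j => gibbs ep (fun c => if c ∈ B' then x else 0) j
          (fun S => bondSpin ep S b)) ≤
      quenched (fun c => if c ∈ B then x else 0)
        (fun j => gibbs ep (fun c => if c ∈ B then x else 0) j
          (fun S => bondSpin ep S b)) ∧
    (∀ B'' : Finset ι,
      quenched (fun c => if c ∈ B'' then x else 0)
        (fun j => gibbs ep (fun c => if c ∈ B'' then x else 0) j
          (fun S => bondSpin ep S b)) ≤ 1) ∧
    ∀ Bseq : ℕ → Finset ι, Monotone Bseq → ∃ l : ℝ,
      Filter.Tendsto (fun n =>
        quenched (fun c => if c ∈ Bseq n then x else 0)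
          (fun j => gibbs ep (fun c => if c ∈ Bseq n then x else 0) j
            (fun S => bondSpin ep S b))) Filter.atTop (nhds l) := by
  have hmono : ∀ {B₁ B₂ : Finset ι}, B₁ ⊆ B₂ →
      quenched (fun c => if c ∈ B₁ then x else 0)
          (fun j => gibbs ep (fun c => if c ∈ B₁ then x else 0) j (fun S => bondSpin ep S b)) ≤
        quenched (fun c => if c ∈ B₂ then x else 0)
          (fun j => gibbs ep (fun c => if c ∈ B₂ then x else 0) j (fun S => bondSpin ep S b)) :=
    fun h12 => quenched_gibbs_bondSpin_le_of_restrict ep b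
      (fun c hc => by simp [hc, h12 hc]) (fun c hc => if_neg hc)
  refine ⟨hmono hBB, fun _ => quenched_gibbs_bondSpin_le_one ep _ _ b, fun Bseq hBseq => ?_⟩
  refine ⟨_, tendsto_atTop_ciSup (fun n m hnm => hmono (hBseq hnm)) ⟨1, ?_⟩⟩
  rintro _ ⟨n, rfl⟩
  exact quenched_gibbs_bondSpin_le_one ep _ _ b

/-- Monotonicity of quenched correlations in the bond set: if `B' ⊆ B`
and `b ∈ B'` then `[⟨S_b⟩]_{B'} ≤ [⟨S_b⟩]_B` (all parameters equal to `x > 0`, correlation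
for bond set `B''` computed with `x_c = 0` for `c ∉ B''`). Moreover `[⟨S_b⟩]_{B''} ≤ 1` for
every bond set `B''`, and consequently along any increasing sequence of bond sets the
quenched correlations `[⟨S_b⟩]` converge. -/
theorem correlation_monotone_in_bonds
    {V ι : Type*} [Fintype V] [DecidableEq V] [Fintype ι] [DecidableEq ι]
    (ep : ι → V × V) (hep : ∀ b, (ep b).1 ≠ (ep b).2)
    (B' B : Finset ι) (hBB : B' ⊆ B) (x : ℝ) (hx : 0 < x) (b : ι) (hb : b ∈ B') :
    quenched (fun c => if c ∈ B' then x else 0)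
        (fun j => gibbs ep (fun c => if c ∈ B' then x else 0) j
          (fun S => bondSpin ep S b)) ≤
      quenched (fun c => if c ∈ B then x else 0)
        (fun j => gibbs ep (fun c => if c ∈ B then x else 0) j
          (fun S => bondSpin ep S b)) ∧
    (∀ B'' : Finset ι,
      quenched (fun c => if c ∈ B'' then x else 0)
        (fun j => gibbs ep (fun c => if c ∈ B'' then x else 0) j
          (fun S => bondSpin ep S b)) ≤ 1) ∧
    ∀ Bseq : ℕ → Finset ι, Monotone Bseq → ∃ l : ℝ,
      Filter.Tendsto (fun n =>
        quenched (fun c => if c ∈ Bseq n then x else 0)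
          (fun j => gibbs ep (fun c => if c ∈ Bseq n then x else 0) j
            (fun S => bondSpin ep S b))) Filter.atTop (nhds l) :=
  correlation_monotone_in_bonds_general ep B' B hBB x b

end
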